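/- arXiv:1206.5956 — 8 statements merged into one kernel-verified Lean document; each statement's English description precedes it below -/
import Mathlib

section
/- Let S = k[x_1,...,x_d] and let f^1,...,f^m be monomials in S. Define φ: S^m → S by φ(e_μ) = f^μ. For each pair μ < ν, set f^{μ,ν} = lcm(f^μ, f^ν) and β_{(μ,ν)} = (f^{μ,ν}/f^ν)·e_ν − (f^{μ,ν}/f^μ)·e_μ. Then the kernel of φ is generated as an S-module by the elements β_{(μ,ν)} for 1 ≤ μ < ν ≤ m. -/
/-!
If `b` is in the kernel and `r x^e e_μ` is one of its terms, the coefficients of `φ b` in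
multidegree `c = e + a μ` sum to zero, so some `ν ≠ μ` with `a ν ≤ c` also has a nonzero
term `x^(c - a ν) e_ν`. Adding `r (x^(c - a ν) e_ν - x^(c - a μ) e_μ)`, a monomial multiple of
`± β_{(μ,ν)}`, removes the term `r x^e e_μ` without creating new
ones; induct on the number of terms.
-/

open MvPolynomial

noncomputable section

namespace MonomialSyzygy

variable {R σ ι : Type*} [CommRing R]

theorem support_sub_monomial_coeff [DecidableEq σ] (p : MvPolynomial σ R) (e : σ →₀ ℕ) :
    (p - monomial e (coeff e p)).support = p.support.erase e := by
  ext x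
  rcases eq_or_ne x e with rfl | hx
  · simp
  · simp [coeff_monomial, Ne.symm hx, hx]

theorem support_add_monomial_subset [DecidableEq σ] {p : MvPolynomial σ R} {e : σ →₀ ℕ}
    (he : e ∈ p.support) (r : R) : (p + monomial e r).support ⊆ p.support :=
  support_add.trans <| Finset.union_subset subset_rfl <|
    support_monomial_subset.trans (Finset.singleton_subset_iff.mpr he)

variable (a : ι → σ →₀ ℕ)

section Fintype

variable [Fintype ι]

def termCount (b : ι → MvPolynomial σ R) : ℕ :=
  ∑ ρ, (b ρ).support.card

theorem coeff_linearCombination (b : ι → MvPolynomial σ R) (c : σ →₀ ℕ) :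
    coeff c (Fintype.linearCombination (MvPolynomial σ R) (fun ρ => monomial (a ρ) (1 : R)) b) =
      ∑ ρ, if a ρ ≤ c then coeff (c - a ρ) (b ρ) else 0 := by
  simp only [Fintype.linearCombination_apply, smul_eq_mul, coeff_sum, coeff_mul_monomial',
    mul_one]

theorem termCount_lt {b b' : ι → MvPolynomial σ R} (hle : ∀ ρ, (b' ρ).support ⊆ (b ρ).support)
    {μ : ι} (hlt : (b' μ).support ⊂ (b μ).support) : termCount b' < termCount b :=
  Finset.sum_lt_sum (fun ρ _ => Finset.card_le_card (hle ρ))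
    ⟨μ, Finset.mem_univ μ, Finset.card_lt_card hlt⟩

end Fintype

variable [DecidableEq ι]

/-- The generator `β_{(μ,ν)}` is `syzygy a (a μ ⊔ a ν) μ ν 1`. -/
def syzygy (c : σ →₀ ℕ) (μ ν : ι) (r : R) : ι → MvPolynomial σ R :=
  Pi.single ν (monomial (c - a ν) r) - Pi.single μ (monomial (c - a μ) r)

theorem syzygy_swap (c : σ →₀ ℕ) (μ ν : ι) (r : R) :
    syzygy a c ν μ r = -syzygy a c μ ν r :=
  (neg_sub _ _).symm

theorem syzygy_eq_smul_syzygy_sup {c : σ →₀ ℕ} {μ ν : ι} (hμ : a μ ≤ c) (hν : a ν ≤ c)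
    (r : R) :
    syzygy a c μ ν r = monomial (c - a μ ⊔ a ν) r • syzygy a (a μ ⊔ a ν) μ ν 1 := by
  rw [syzygy, syzygy, smul_sub, ← Pi.single_smul, ← Pi.single_smul, smul_eq_mul, smul_eq_mul,
    monomial_mul, monomial_mul, mul_one, tsub_add_tsub_cancel (sup_le hμ hν) le_sup_right,
    tsub_add_tsub_cancel (sup_le hμ hν) le_sup_left]

theorem syzygy_mem_span [LinearOrder ι] {c : σ →₀ ℕ} {μ ν : ι} (hμν : μ ≠ ν)
    (hμ : a μ ≤ c) (hν : a ν ≤ c) (r : R) :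
    syzygy a c μ ν r ∈ Submodule.span (MvPolynomial σ R)
      {b | ∃ μ ν : ι, μ < ν ∧ b = syzygy a (a μ ⊔ a ν) μ ν 1} := by
  rcases hμν.lt_or_gt with hlt | hlt
  · rw [syzygy_eq_smul_syzygy_sup a hμ hν]
    exact Submodule.smul_mem _ _ (Submodule.subset_span ⟨μ, ν, hlt, rfl⟩)
  · rw [← neg_neg (syzygy a c μ ν r), ← syzygy_swap, syzygy_eq_smul_syzygy_sup a hν hμ]
    exact Submodule.neg_mem _ (Submodule.smul_mem _ _ (Submodule.subset_span ⟨ν, μ, hlt, rfl⟩))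

variable [Fintype ι]

theorem linearCombination_syzygy {c : σ →₀ ℕ} {μ ν : ι} (hμ : a μ ≤ c) (hν : a ν ≤ c) (r : R) :
    Fintype.linearCombination (MvPolynomial σ R) (fun ρ => monomial (a ρ) (1 : R))
      (syzygy a c μ ν r) = 0 := by
  simp only [syzygy, map_sub, Fintype.linearCombination_apply_single, smul_eq_mul, monomial_mul,
    mul_one, tsub_add_cancel_of_le hμ, tsub_add_cancel_of_le hν, sub_self]

theorem exists_termCount_add_syzygy_lt {b : ι → MvPolynomial σ R}
    (hb : Fintype.linearCombination (MvPolynomial σ R) (fun ρ => monomial (a ρ) (1 : R)) b = 0)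
    (hb0 : b ≠ 0) :
    ∃ c μ ν r, μ ≠ ν ∧ a μ ≤ c ∧ a ν ≤ c ∧ termCount (b + syzygy a c μ ν r) < termCount b := by
  classical
  obtain ⟨μ, hμ⟩ := Function.ne_iff.mp hb0
  obtain ⟨e, he⟩ := support_nonempty.mpr hμ
  set c := e + a μ
  set t : ι → R := fun ρ => if a ρ ≤ c then coeff (c - a ρ) (b ρ) else 0
  have hμc : a μ ≤ c := le_add_self
  have hcμ : c - a μ = e := add_tsub_cancel_right e (a μ)
  have htμ : t μ ≠ 0 := by simpa [t, hμc, hcμ] using he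
  have ht : ∑ ρ, t ρ = 0 := by rw [← coeff_linearCombination, hb, coeff_zero]
  obtain ⟨ν, hνμ, htν⟩ : ∃ ν ≠ μ, t ν ≠ 0 := by
    rw [← Finset.add_sum_erase _ _ (Finset.mem_univ μ), add_eq_zero_iff_eq_neg'] at ht
    obtain ⟨ν, hν, htν⟩ := Finset.exists_ne_zero_of_sum_ne_zero (ht ▸ neg_ne_zero.mpr htμ)
    exact ⟨ν, Finset.ne_of_mem_erase hν, htν⟩
  have hνc : a ν ≤ c := by
    by_contra h
    simp [t, h] at htν
  have hsuppμ : (b μ + syzygy a c μ ν (coeff e (b μ)) μ).support = (b μ).support.erase e := by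
    simp [syzygy, hνμ.symm, hcμ, ← sub_eq_add_neg, support_sub_monomial_coeff]
  refine ⟨c, μ, ν, coeff e (b μ), hνμ.symm, hμc, hνc, termCount_lt (μ := μ) (fun ρ => ?_) ?_⟩
  · rcases eq_or_ne ρ ν with rfl | hρν
    · have hcν : c - a ρ ∈ (b ρ).support := by simpa [t, hνc] using htν
      simpa [syzygy, hνμ] using support_add_monomial_subset hcν _
    rcases eq_or_ne ρ μ with rfl | hρμ
    · exact hsuppμ.trans_subset (Finset.erase_subset _ _)
    · simp [syzygy, hρν, hρμ]
  · exact hsuppμ.trans_ssubset (Finset.erase_ssubset he)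

theorem mem_span_of_linearCombination_eq_zero [LinearOrder ι] {b : ι → MvPolynomial σ R}
    (hb : Fintype.linearCombination (MvPolynomial σ R) (fun ρ => monomial (a ρ) (1 : R)) b = 0) :
    b ∈ Submodule.span (MvPolynomial σ R)
      {b | ∃ μ ν : ι, μ < ν ∧ b = syzygy a (a μ ⊔ a ν) μ ν 1} := by
  induction hn : termCount b using Nat.strong_induction_on generalizing b with
  | _ n ih =>
  rcases eq_or_ne b 0 with rfl | hb0
  · exact Submodule.zero_mem _
  obtain ⟨c, μ, ν, r, hμν, hμ, hν, hlt⟩ := exists_termCount_add_syzygy_lt a hb hb0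
  have hb' : b + syzygy a c μ ν r ∈ Submodule.span (MvPolynomial σ R)
      {b | ∃ μ ν : ι, μ < ν ∧ b = syzygy a (a μ ⊔ a ν) μ ν 1} :=
    ih _ (hn ▸ hlt) (by rw [map_add, hb, linearCombination_syzygy a hμ hν, zero_add]) rfl
  simpa using Submodule.sub_mem _ hb' (syzygy_mem_span a hμν hμ hν r)

theorem ker_linearCombination_monomial [LinearOrder ι] :
    LinearMap.ker (Fintype.linearCombination (MvPolynomial σ R) (fun ρ => monomial (a ρ) (1 : R))) =
      Submodule.span (MvPolynomial σ R)
        {b | ∃ μ ν : ι, μ < ν ∧ b = syzygy a (a μ ⊔ a ν) μ ν 1} := by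
  refine le_antisymm (fun b hb => mem_span_of_linearCombination_eq_zero a hb) ?_
  rw [Submodule.span_le]
  rintro _ ⟨μ, ν, -, rfl⟩
  exact linearCombination_syzygy a le_sup_left le_sup_right 1

end MonomialSyzygy

end

theorem stmt0_general {K : Type*} [Field K] (d m : ℕ)
    (a : Fin m → (Fin d →₀ ℕ)) :
    LinearMap.ker (Fintype.linearCombination (MvPolynomial (Fin d) K)
        (fun μ => (monomial (a μ) (1 : K)))) =
      Submodule.span (MvPolynomial (Fin d) K)
        { b : Fin m → MvPolynomial (Fin d) K | ∃ μ ν : Fin m, μ < ν ∧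
            b = Pi.single ν (monomial (a μ ⊔ a ν - a ν) (1 : K))
              - Pi.single μ (monomial (a μ ⊔ a ν - a μ) (1 : K)) } :=
  MonomialSyzygy.ker_linearCombination_monomial a

/-- Lemma 2.1: the kernel of the map `φ : S^m → S`, `e_μ ↦ f^μ` (the `f^μ` monomials with
exponent vectors `a μ`) is generated by the Koszul-type syzygies
`β_{(μ,ν)} = (f^{μ,ν}/f^ν) e_ν − (f^{μ,ν}/f^μ) e_μ` for `μ < ν`. -/
theorem stmt0 {K : Type*} [Field K] (d m : ℕ) (hm : 2 ≤ m)
    (a : Fin m → (Fin d →₀ ℕ)) :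
    LinearMap.ker (Fintype.linearCombination (MvPolynomial (Fin d) K)
        (fun μ => (monomial (a μ) (1 : K)))) =
      Submodule.span (MvPolynomial (Fin d) K)
        { b : Fin m → MvPolynomial (Fin d) K | ∃ μ ν : Fin m, μ < ν ∧
            b = Pi.single ν (monomial (a μ ⊔ a ν - a ν) (1 : K))
              - Pi.single μ (monomial (a μ ⊔ a ν - a μ) (1 : K)) } :=
  stmt0_general d m a
end

section
/- Let S = k[x_1,...,x_d] and let f^1,...,f^m be monomials (m ≥ 3). Set β_j = (f^{j,j+1}/f^{j+1})e_{j+1} − (f^{j,j+1}/f^j)e_j for 1 ≤ j ≤ m−1 and β_m = (f^{1,m}/f^m)e_m − (f^{1,m}/f^1)e_1, where f^{i,j} = lcm(f^i,f^j). Then the module of syzygies on β_1,...,β_m (the kernel of the map S^m → S^m sending ε_j ↦ β_j) is a free S-module of rank one, generated by σ_0 = −(L/f^{1,m})ε_m + Σ_{j=1}^{m−1} (L/f^{j,j+1})ε_j, where L = lcm(f^1,...,f^m). -/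
/-!
Multiplying the `j`-th relation by the monomial `f^{j+1}` shows that `s` is a syzygy iff the
products `s_j f^{j,j+1}` all coincide, say with `g`. Then `g` is divisible by every `f^{j,j+1}`,
hence by their lcm `L`, and cancelling `f^{j,j+1}` gives `s = (g / L) σ₀`.
-/

open MvPolynomial

section Cycle

variable {R : Type*} [CommRing R] {m : ℕ} [NeZero m]

def cycleMap (p q : Fin m → R) : (Fin m → R) →ₗ[R] Fin m → R :=
  Fintype.linearCombination R fun j => Pi.single (j + 1) (p j) - Pi.single j (q j)

lemma cycleMap_apply (p q s : Fin m → R) (i : Fin m) :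
    cycleMap p q s i = s (i - 1) * p (i - 1) - s i * q i := by
  classical
  simp only [cycleMap, Fintype.linearCombination_apply, Finset.sum_apply, Pi.smul_apply,
    Pi.sub_apply, smul_sub, Finset.sum_sub_distrib, Pi.single_apply, smul_eq_mul, mul_ite,
    mul_zero, ← sub_eq_iff_eq_add, Finset.sum_ite_eq, Finset.mem_univ, if_true]

lemma mem_ker_cycleMap_iff {p q s : Fin m → R} :
    s ∈ LinearMap.ker (cycleMap p q) ↔ ∀ j, s j * p j = s (j + 1) * q (j + 1) := by
  rw [LinearMap.mem_ker, funext_iff, (Equiv.subRight (1 : Fin m)).forall_congr_left]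
  simp [cycleMap_apply, sub_eq_zero]

end Cycle

section Fin

variable {m : ℕ} [NeZero m]

lemma Fin.forall_eq_add_one_iff {α : Type*} {f : Fin m → α} :
    (∀ i, f i = f (i + 1)) ↔ ∃ c, ∀ i, f i = c := by
  refine ⟨fun h => ⟨f 0, ?_⟩, fun ⟨c, hc⟩ i => (hc i).trans (hc (i + 1)).symm⟩
  obtain ⟨n, rfl⟩ := Nat.exists_eq_succ_of_ne_zero (NeZero.ne m)
  intro i
  induction i using Fin.induction with
  | zero => rfl
  | succ i ih => rw [← Fin.coeSucc_eq_succ, ← h, ih]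

lemma Fin.univ_sup_sup_add_one {α : Type*} [SemilatticeSup α] [OrderBot α] (a : Fin m → α) :
    Finset.univ.sup (fun j => a j ⊔ a (j + 1)) = Finset.univ.sup a :=
  le_antisymm
    (Finset.sup_le fun _ _ => sup_le (Finset.le_sup (Finset.mem_univ _))
      (Finset.le_sup (Finset.mem_univ _)))
    (Finset.sup_mono_fun fun _ _ => le_sup_left)

end Fin

namespace MvPolynomial

section CommSemiring

variable {R σ : Type*} [CommSemiring R]

lemma monomial_one_dvd_iff_forall_le {u : σ →₀ ℕ} {g : MvPolynomial σ R} :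
    monomial u (1 : R) ∣ g ↔ ∀ w ∈ g.support, u ≤ w := by
  rw [← Ideal.mem_span_singleton, ← Set.image_singleton (f := fun u => monomial u (1 : R)),
    mem_ideal_span_monomial_image]
  simp

lemma monomial_finset_sup_dvd_iff {ι : Type*} (t : Finset ι) (u : ι → σ →₀ ℕ)
    {g : MvPolynomial σ R} :
    monomial (t.sup u) (1 : R) ∣ g ↔ ∀ j ∈ t, monomial (u j) (1 : R) ∣ g := by
  simp only [monomial_one_dvd_iff_forall_le, Finset.sup_le_iff]
  exact forall₂_comm

lemma exists_forall_mul_monomial_eq_iff_mem_span {ι : Type*} [Fintype ι] (M : ι → σ →₀ ℕ)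
    (s : ι → MvPolynomial σ R) :
    (∃ g, ∀ j, s j * monomial (M j) 1 = g) ↔
      s ∈ Submodule.span (MvPolynomial σ R)
        {fun j => monomial (Finset.univ.sup M - M j) (1 : R)} := by
  have hcomplement (j : ι) :
      monomial (Finset.univ.sup M - M j) (1 : R) * monomial (M j) 1 =
        monomial (Finset.univ.sup M) 1 := by
    rw [monomial_mul, one_mul, tsub_add_cancel_of_le (Finset.le_sup (Finset.mem_univ j))]
  rw [Submodule.mem_span_singleton]
  constructor
  · rintro ⟨g, hg⟩
    have hdvd : monomial (Finset.univ.sup M) (1 : R) ∣ g :=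
      (monomial_finset_sup_dvd_iff _ _).2 fun j _ => ⟨s j, (hg j).symm.trans (mul_comm _ _)⟩
    obtain ⟨h, rfl⟩ := hdvd
    refine ⟨h, ?_⟩
    funext j
    rw [← monomial_one_mul_cancel_right_iff (m := M j), Pi.smul_apply, smul_eq_mul, mul_assoc,
      hcomplement, hg, mul_comm]
  · rintro ⟨h, rfl⟩
    exact ⟨h * monomial (Finset.univ.sup M) 1, fun j => by
      rw [Pi.smul_apply, smul_eq_mul, mul_assoc, hcomplement]⟩

end CommSemiring

section CommRing

variable {R σ : Type*} [CommRing R] {m : ℕ} [NeZero m]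

lemma mem_ker_cycleMap_monomial_iff (a : Fin m → σ →₀ ℕ) (s : Fin m → MvPolynomial σ R) :
    s ∈ LinearMap.ker (cycleMap (fun j => monomial (a j ⊔ a (j + 1) - a (j + 1)) (1 : R))
        (fun j => monomial (a j ⊔ a (j + 1) - a j) 1)) ↔
      ∃ g, ∀ j, s j * monomial (a j ⊔ a (j + 1)) 1 = g := by
  rw [mem_ker_cycleMap_iff, ← Fin.forall_eq_add_one_iff]
  refine forall_congr' fun j => ?_
  rw [← monomial_one_mul_cancel_right_iff (m := a (j + 1)), mul_assoc, mul_assoc, monomial_mul,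
    monomial_mul, one_mul, tsub_add_cancel_of_le le_sup_right,
    tsub_add_cancel_of_le le_sup_left]

end CommRing

end MvPolynomial

theorem stmt2_general {K : Type*} [Field K] (d m : ℕ) [NeZero m]
    (a : Fin m → (Fin d →₀ ℕ)) :
    LinearMap.ker (Fintype.linearCombination (MvPolynomial (Fin d) K)
        (fun j : Fin m =>
          (Pi.single (j + 1) (monomial (a j ⊔ a (j + 1) - a (j + 1)) (1 : K))
            - Pi.single j (monomial (a j ⊔ a (j + 1) - a j) (1 : K))
              : Fin m → MvPolynomial (Fin d) K))) =
      Submodule.span (MvPolynomial (Fin d) K)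
        {fun j : Fin m =>
          monomial (Finset.univ.sup a - (a j ⊔ a (j + 1))) (1 : K)} ∧
    (fun j : Fin m => monomial (Finset.univ.sup a - (a j ⊔ a (j + 1))) (1 : K))
      ≠ (0 : Fin m → MvPolynomial (Fin d) K) := by
  refine ⟨?_, Function.ne_iff.2 ⟨0, monomial_eq_zero.not.2 one_ne_zero⟩⟩
  ext s
  rw [← Fin.univ_sup_sup_add_one a, ← exists_forall_mul_monomial_eq_iff_mem_span]
  exact mem_ker_cycleMap_monomial_iff a s

/-- Lemma 2.2 (second part): the syzygy module on the cycle generators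
`β_j = (f^{j,j+1}/f^{j+1}) e_{j+1} − (f^{j,j+1}/f^j) e_j` (indices cyclic in `Fin m`, `m ≥ 3`)
is a free module of rank one, generated by
`σ₀ = ∑_j (lcm(f^1,…,f^m)/f^{j,j+1}) ε_j`.  Here `a j` is the exponent vector of `f^j`. -/
theorem stmt2 {K : Type*} [Field K] (d m : ℕ) (hm : 3 ≤ m) [NeZero m]
    (a : Fin m → (Fin d →₀ ℕ)) :
    LinearMap.ker (Fintype.linearCombination (MvPolynomial (Fin d) K)
        (fun j : Fin m =>
          (Pi.single (j + 1) (monomial (a j ⊔ a (j + 1) - a (j + 1)) (1 : K))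
            - Pi.single j (monomial (a j ⊔ a (j + 1) - a j) (1 : K))
              : Fin m → MvPolynomial (Fin d) K))) =
      Submodule.span (MvPolynomial (Fin d) K)
        {fun j : Fin m =>
          monomial (Finset.univ.sup a - (a j ⊔ a (j + 1))) (1 : K)} ∧
    (fun j : Fin m => monomial (Finset.univ.sup a - (a j ⊔ a (j + 1))) (1 : K))
      ≠ (0 : Fin m → MvPolynomial (Fin d) K) :=
  stmt2_general d m a
end

section
/- With S = k[x_1,...,x_d] and monomials f^1,...,f^m, if s_1,...,s_m ∈ S satisfy the syzygy equations s_1·f^{1,2} = s_2·f^{2,3} = ⋯ = s_{m−1}·f^{m−1,m} = −s_m·f^{1,m} (where f^{i,j} = lcm(f^i,f^j)), then lcm(f^1,...,f^m) divides s_1·f^{1,2}. -/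
/-! Following the chain of equations, `s_0 f^{0,1}` equals `s_i f^{i,i+1}` for every `i ≤ m - 2`
and `-s_{m-1} f^{0,m-1}`, so every `f^i` divides it. Divisibility by a monomial only depends on
the exponents occurring in the support, so being divisible by each `f^i` is the same as being
divisible by their lcm. -/

open MvPolynomial

namespace MvPolynomial

variable {σ R : Type*} [CommSemiring R]

theorem monomial_one_dvd_iff_le_of_mem_support {b : σ →₀ ℕ} {p : MvPolynomial σ R} :
    monomial b (1 : R) ∣ p ↔ ∀ c ∈ p.support, b ≤ c := by
  classical
  rw [monomial_one_dvd_iff_modMonomial_eq_zero, MvPolynomial.ext_iff]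
  refine forall_congr' fun c => ?_
  by_cases hbc : b ≤ c
  · simp [coeff_modMonomial_of_le _ hbc, hbc]
  · simp [coeff_modMonomial_of_not_le _ hbc, hbc]

theorem monomial_one_finset_sup_dvd_iff {ι : Type*} {s : Finset ι} {a : ι → σ →₀ ℕ}
    {p : MvPolynomial σ R} :
    monomial (s.sup a) (1 : R) ∣ p ↔ ∀ i ∈ s, monomial (a i) (1 : R) ∣ p := by
  simp only [monomial_one_dvd_iff_le_of_mem_support, Finset.sup_le_iff]
  exact ⟨fun h i hi c hc => h c hc i hi, fun h c hc i hi => h i hi c hc⟩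

end MvPolynomial

theorem syzygy_chain_eq {σ R : Type*} [CommSemiring R] {m : ℕ} {a : ℕ → σ →₀ ℕ}
    {s : ℕ → MvPolynomial σ R}
    (h : ∀ j : ℕ, j + 2 < m →
      s j * monomial (a j ⊔ a (j + 1)) (1 : R)
        = s (j + 1) * monomial (a (j + 1) ⊔ a (j + 2)) (1 : R))
    {j : ℕ} (hj : j ≤ m - 2) :
    s 0 * monomial (a 0 ⊔ a 1) (1 : R) = s j * monomial (a j ⊔ a (j + 1)) (1 : R) := by
  induction j with
  | zero => rfl
  | succ n ih => rw [ih (by omega), h n (by omega)]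

/-- Indices are 0-based and `a i` is the exponent vector of `f^i`, so `f^{i,j}` is
`monomial (a i ⊔ a j) 1` and `lcm(f^0,…,f^{m−1})` is `monomial ((range m).sup a) 1`. -/
theorem stmt3_general {K : Type*} [Field K] (d m : ℕ)
    (a : ℕ → (Fin d →₀ ℕ)) (s : ℕ → MvPolynomial (Fin d) K)
    (h1 : ∀ j : ℕ, j + 2 < m →
      s j * monomial (a j ⊔ a (j + 1)) (1 : K)
        = s (j + 1) * monomial (a (j + 1) ⊔ a (j + 2)) (1 : K))
    (h2 : s (m - 2) * monomial (a (m - 2) ⊔ a (m - 1)) (1 : K)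
        = - (s (m - 1) * monomial (a 0 ⊔ a (m - 1)) (1 : K))) :
    (monomial ((Finset.range m).sup a) (1 : K)) ∣ s 0 * monomial (a 0 ⊔ a 1) (1 : K) := by
  rw [monomial_one_finset_sup_dvd_iff]
  intro i hi
  rcases Nat.lt_or_ge (m - 2) i with hlast | hi'
  · obtain rfl : i = m - 1 := by rw [Finset.mem_range] at hi; omega
    rw [syzygy_chain_eq h1 le_rfl, show m - 2 + 1 = m - 1 by omega, h2, dvd_neg]
    exact dvd_mul_of_dvd_right (monomial_one_dvd_monomial_one.2 le_sup_right) _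
  · rw [syzygy_chain_eq h1 hi']
    exact dvd_mul_of_dvd_right (monomial_one_dvd_monomial_one.2 le_sup_left) _

/-- Equations (2.3): if `s_0 f^{0,1} = s_1 f^{1,2} = ⋯ = s_{m−2} f^{m−2,m−1} = −s_{m−1} f^{0,m−1}`
(0-indexed; `f^{i,j} = lcm(f^i, f^j)` with `a i` the exponent vector of the monomial `f^i`),
then `lcm(f^0,…,f^{m−1})` divides `s_0 · f^{0,1}`. -/
theorem stmt3 {K : Type*} [Field K] (d m : ℕ) (hm : 2 ≤ m)
    (a : ℕ → (Fin d →₀ ℕ)) (s : ℕ → MvPolynomial (Fin d) K)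
    (h1 : ∀ j : ℕ, j + 2 < m →
      s j * monomial (a j ⊔ a (j + 1)) (1 : K)
        = s (j + 1) * monomial (a (j + 1) ⊔ a (j + 2)) (1 : K))
    (h2 : s (m - 2) * monomial (a (m - 2) ⊔ a (m - 1)) (1 : K)
        = - (s (m - 1) * monomial (a 0 ⊔ a (m - 1)) (1 : K))) :
    (monomial ((Finset.range m).sup a) (1 : K)) ∣ s 0 * monomial (a 0 ⊔ a 1) (1 : K) :=
  stmt3_general d m a s h1 h2
end

section
/- Let γ be a circuit in a graph Γ_k with monomials f^μ assigned to vertices, and suppose a chord c = (μ_r, μ_s) of γ splits γ into two circuits γ_1 = (μ_r,...,μ_s,μ_r) and γ_2 = (μ_1,...,μ_r,μ_s,...,μ_ℓ,μ_1). Then the syzygy σ_γ satisfies σ_γ = (f^γ/f^{γ_1})·σ_{γ_1} + (f^γ/f^{γ_2})·σ_{γ_2}; in particular σ_γ lies in the S-module generated by σ_{γ_1} and σ_{γ_2}. -/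
/-!
Multiplying `σ_{γᵢ}` by `f^γ / f^{γᵢ}` turns the coefficient of every edge `e` of `γᵢ` into
`f^γ / f^e`, which depends on `e` alone. Hence both sides are sums, over edges, of one fixed
antisymmetric function of oriented edges: the edges of `γ₁` and `γ₂` together are those of `γ` plus
the chord traversed once in each direction, and the two chord terms cancel.
-/

open MvPolynomial Finset

namespace ChordSyzygy

section CycleSum

variable {α M : Type*} [AddCommMonoid M]

/-- The sum of `g` over the oriented edges of the closed walk `w 0, …, w (L - 1), w 0`. -/
def cycleSum (g : α → α → M) (L : ℕ) (w : ℕ → α) : M :=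
  ∑ i ∈ range L, g (w i) (w ((i + 1) % L))

def pathSum (g : α → α → M) (w : ℕ → α) (p q : ℕ) : M :=
  ∑ i ∈ Ico p q, g (w i) (w (i + 1))

variable (g : α → α → M)

lemma cycleSum_succ (n : ℕ) (w : ℕ → α) :
    cycleSum g (n + 1) w = pathSum g w 0 n + g (w n) (w 0) := by
  rw [cycleSum, pathSum, sum_range_succ, ← range_eq_Ico, Nat.mod_self]
  congr 1
  exact sum_congr rfl fun i hi => by rw [Nat.mod_eq_of_lt (by simpa using hi)]

lemma pathSum_shift (w : ℕ → α) (c p q : ℕ) :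
    pathSum g (fun i => w (i + c)) p q = pathSum g w (p + c) (q + c) := by
  rw [pathSum, pathSum, ← sum_Ico_add']
  simp only [Nat.add_right_comm]

lemma pathSum_eq_add_pathSum_succ (w : ℕ → α) {p q : ℕ} (hpq : p < q) :
    pathSum g w p q = g (w p) (w (p + 1)) + pathSum g w (p + 1) q :=
  sum_eq_sum_Ico_succ_bot hpq _

lemma pathSum_trans (w : ℕ → α) {p q t : ℕ} (hpq : p ≤ q) (hqt : q ≤ t) :
    pathSum g w p q + pathSum g w q t = pathSum g w p t :=
  sum_Ico_consecutive _ hpq hqt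

/-- A chord `(v r, v s)` of a closed walk of length `ℓ` splits it into the closed walks
`v r, …, v s, v r` and `v 0, …, v r, v s, …, v (ℓ - 1), v 0`. -/
theorem cycleSum_eq_add_of_chord {ℓ r s : ℕ} (hrs : r < s) (hsℓ : s < ℓ) (v : ℕ → α)
    (hchord : g (v s) (v r) + g (v r) (v s) = 0) :
    cycleSum g ℓ v
      = cycleSum g (s - r + 1) (fun i => v (r + i))
        + cycleSum g (r + 1 + (ℓ - s)) (fun i => if i ≤ r then v i else v (i + (s - r - 1))) := by
  set w₂ : ℕ → α := fun i => if i ≤ r then v i else v (i + (s - r - 1))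
  obtain ⟨n, rfl⟩ : ∃ n, ℓ = n + 1 := ⟨ℓ - 1, by omega⟩
  have hγ₁ : cycleSum g (s - r + 1) (fun i => v (r + i)) = pathSum g v r s + g (v s) (v r) := by
    simp only [cycleSum_succ, add_comm r, pathSum_shift, zero_add, Nat.sub_add_cancel hrs.le]
  have hhead : pathSum g w₂ 0 r = pathSum g v 0 r :=
    sum_congr rfl fun i hi => by
      have := (mem_Ico.1 hi).2
      simp only [w₂, if_pos this.le, if_pos (Nat.succ_le_of_lt this)]
  have htail : pathSum g w₂ (r + 1) (r + (n + 1 - s)) = pathSum g v s n := by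
    have hshift : pathSum g v s n
        = pathSum g (fun i => v (i + (s - r - 1))) (r + 1) (r + (n + 1 - s)) := by
      rw [pathSum_shift]
      congr 1 <;> omega
    rw [hshift]
    exact sum_congr rfl fun i hi => by
      have := (mem_Ico.1 hi).1
      simp only [w₂, if_neg (show ¬i ≤ r by omega), if_neg (show ¬i + 1 ≤ r by omega)]
  have hγ₂ : cycleSum g (r + 1 + (n + 1 - s)) w₂
      = pathSum g v 0 r + g (v r) (v s) + pathSum g v s n + g (v n) (v 0) := by
    rw [show r + 1 + (n + 1 - s) = r + (n + 1 - s) + 1 by omega, cycleSum_succ,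
      ← pathSum_trans g w₂ (Nat.zero_le r) (Nat.le_add_right r _),
      pathSum_eq_add_pathSum_succ g w₂ (by omega : r < r + (n + 1 - s)), hhead, htail]
    simp only [w₂, if_pos le_rfl, if_neg (show ¬r + 1 ≤ r by omega),
      if_neg (show ¬r + (n + 1 - s) ≤ r by omega), if_pos (Nat.zero_le r),
      show r + 1 + (s - r - 1) = s by omega, show r + (n + 1 - s) + (s - r - 1) = n by omega]
    abel
  rw [hγ₁, hγ₂, cycleSum_succ, ← pathSum_trans g v (Nat.zero_le r) (by omega : r ≤ n),
    ← pathSum_trans g v hrs.le (by omega : s ≤ n)]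
  calc _ = pathSum g v 0 r + pathSum g v r s + pathSum g v s n + g (v n) (v 0)
          + (g (v s) (v r) + g (v r) (v s)) := by rw [hchord, add_zero]; abel
    _ = _ := by abel

end CycleSum

section Syzygy

variable {α σ R : Type*} [CommRing R]

/-- `signedBasis u w c` is `c • ε_(u,w)`, where `ε_(w,u) = -ε_(u,w)` and `ε_(u,w)` for `u ≤ w` is
a basis vector of the free module on pairs. -/
noncomputable def signedBasis [LinearOrder α] (u w : α) (c : R) : α × α → R :=
  if u ≤ w then Pi.single (u, w) c else - Pi.single (w, u) c

lemma signedBasis_mul [LinearOrder α] (u w : α) (q c : R) :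
    signedBasis u w (q * c) = q • signedBasis u w c := by
  unfold signedBasis
  split_ifs <;> simp only [← smul_eq_mul, Pi.single_smul', smul_neg]

lemma signedBasis_swap_add [LinearOrder α] {u w : α} (h : u ≠ w) (c : R) :
    signedBasis w u c + signedBasis u w c = 0 := by
  unfold signedBasis
  rcases h.lt_or_gt with huw | hwu
  · rw [if_neg huw.not_ge, if_pos huw.le, neg_add_cancel]
  · rw [if_pos hwu.le, if_neg hwu.not_ge, add_neg_cancel]

variable (R) (a : α → σ →₀ ℕ)

/-- The exponent of `f^w = lcm {f^(w i) : i < L}`. -/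
noncomputable def lcmExp (L : ℕ) (w : ℕ → α) : σ →₀ ℕ :=
  (range L).sup fun i => a (w i)

/-- The term `(x^F / f^e) ε_e` of the edge `e = (u, w)`, at the common exponent `F`. -/
noncomputable def edgeTerm [LinearOrder α] (F : σ →₀ ℕ) (u w : α) : α × α → MvPolynomial σ R :=
  signedBasis u w (monomial (F - (a u ⊔ a w)) 1)

noncomputable def syzygy [LinearOrder α] (L : ℕ) (w : ℕ → α) : α × α → MvPolynomial σ R :=
  cycleSum (edgeTerm R a (lcmExp a L w)) L w

variable {R a}

lemma lcmExp_le_of_forall_exists {L ℓ : ℕ} {w v : ℕ → α}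
    (h : ∀ i < L, ∃ j < ℓ, w i = v j) : lcmExp a L w ≤ lcmExp a ℓ v :=
  Finset.sup_le fun i hi => by
    obtain ⟨j, hj, hij⟩ := h i (mem_range.1 hi)
    exact hij ▸ le_sup (f := fun j => a (v j)) (mem_range.2 hj)

lemma edgeTerm_swap_add [LinearOrder α] (F : σ →₀ ℕ) {u w : α} (h : u ≠ w) :
    edgeTerm R a F w u + edgeTerm R a F u w = 0 := by
  rw [edgeTerm, edgeTerm, sup_comm]
  exact signedBasis_swap_add h _

lemma monomial_smul_syzygy [LinearOrder α] {L : ℕ} {w : ℕ → α} {F : σ →₀ ℕ}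
    (hF : lcmExp a L w ≤ F) :
    monomial (F - lcmExp a L w) (1 : R) • syzygy R a L w = cycleSum (edgeTerm R a F) L w := by
  rw [syzygy, cycleSum, cycleSum, smul_sum]
  refine sum_congr rfl fun i hi => ?_
  have hL : 0 < L := pos_of_ne_zero (by rintro rfl; simp at hi)
  have hedge : a (w i) ⊔ a (w ((i + 1) % L)) ≤ lcmExp a L w :=
    sup_le (le_sup (f := fun j => a (w j)) hi)
      (le_sup (f := fun j => a (w j)) (mem_range.2 (Nat.mod_lt _ hL)))
  rw [edgeTerm, edgeTerm, ← signedBasis_mul, monomial_mul, one_mul, tsub_add_tsub_cancel hF hedge]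

end Syzygy

end ChordSyzygy

open ChordSyzygy in
theorem stmt5_general {K : Type*} [Field K] (d m ℓ r s : ℕ)
    (hrs : r + 2 ≤ s) (hsl : s < ℓ)
    (v : ℕ → Fin m) (hv : ∀ i < ℓ, ∀ j < ℓ, v i = v j → i = j)
    (a : Fin m → (Fin d →₀ ℕ)) :
    (letI S := MvPolynomial (Fin d) K
     letI eps : Fin m → Fin m → S → (Fin m × Fin m → S) := fun u w c =>
       if u ≤ w then Pi.single (u, w) c else - Pi.single (w, u) c
     letI fw : ℕ → (ℕ → Fin m) → (Fin d →₀ ℕ) := fun L w =>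
       (Finset.range L).sup fun i => a (w i)
     letI σ : ℕ → (ℕ → Fin m) → (Fin m × Fin m → S) := fun L w =>
       ∑ i ∈ Finset.range L, eps (w i) (w ((i + 1) % L))
         (monomial (fw L w - (a (w i) ⊔ a (w ((i + 1) % L)))) (1 : K))
     letI w₁ : ℕ → Fin m := fun i => v (r + i)
     letI ℓ₁ : ℕ := s - r + 1
     letI w₂ : ℕ → Fin m := fun i => if i ≤ r then v i else v (i + (s - r - 1))
     letI ℓ₂ : ℕ := r + 1 + (ℓ - s)
     σ ℓ v = (monomial (fw ℓ v - fw ℓ₁ w₁) (1 : K)) • σ ℓ₁ w₁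
           + (monomial (fw ℓ v - fw ℓ₂ w₂) (1 : K)) • σ ℓ₂ w₂
       ∧ σ ℓ v ∈ Submodule.span S {σ ℓ₁ w₁, σ ℓ₂ w₂}) := by
  set w₁ : ℕ → Fin m := fun i => v (r + i)
  set w₂ : ℕ → Fin m := fun i => if i ≤ r then v i else v (i + (s - r - 1))
  have hvrs : v r ≠ v s := fun h => by have := hv r (by omega) s hsl h; omega
  have h₁ : lcmExp a (s - r + 1) w₁ ≤ lcmExp a ℓ v :=
    lcmExp_le_of_forall_exists fun i hi => ⟨r + i, by omega, rfl⟩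
  have h₂ : lcmExp a (r + 1 + (ℓ - s)) w₂ ≤ lcmExp a ℓ v :=
    lcmExp_le_of_forall_exists fun i hi => by
      simp only [w₂]
      split_ifs
      exacts [⟨i, by omega, rfl⟩, ⟨i + (s - r - 1), by omega, rfl⟩]
  have hsplit : syzygy K a ℓ v
      = monomial (lcmExp a ℓ v - lcmExp a (s - r + 1) w₁) (1 : K) • syzygy K a (s - r + 1) w₁
        + monomial (lcmExp a ℓ v - lcmExp a (r + 1 + (ℓ - s)) w₂) (1 : K)
          • syzygy K a (r + 1 + (ℓ - s)) w₂ := by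
    rw [monomial_smul_syzygy h₁, monomial_smul_syzygy h₂]
    exact cycleSum_eq_add_of_chord _ (by omega) hsl v (edgeTerm_swap_add _ hvrs)
  exact ⟨hsplit, Submodule.mem_span_pair.2 ⟨_, _, hsplit.symm⟩⟩

/-- Lemma 2.4: if a chord `c = (v r, v s)` splits a circuit `γ = (v 0, …, v (ℓ−1), v 0)` into the
two circuits `γ₁ = (v r, …, v s, v r)` and `γ₂ = (v 0, …, v r, v s, …, v (ℓ−1), v 0)`, then
`σ_γ = (f^γ/f^{γ₁}) σ_{γ₁} + (f^γ/f^{γ₂}) σ_{γ₂}`; in particular `σ_γ` lies in the module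
generated by `σ_{γ₁}` and `σ_{γ₂}`.  Here `a μ` is the exponent vector of the monomial `f^μ`,
`εₑ` are the basis vectors of the free module indexed by ordered pairs, and for a walk `w` of
length `L`, `σ(L,w) = ∑ sign_w(e) (f^w/f^e) εₑ`. -/
theorem stmt5 {K : Type*} [Field K] (d m ℓ r s : ℕ)
    (hl : 4 ≤ ℓ) (hrs : r + 2 ≤ s) (hsl : s < ℓ) (hchord : s + 2 ≤ ℓ + r)
    (v : ℕ → Fin m) (hv : ∀ i < ℓ, ∀ j < ℓ, v i = v j → i = j)
    (a : Fin m → (Fin d →₀ ℕ)) :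
    (letI S := MvPolynomial (Fin d) K
     letI eps : Fin m → Fin m → S → (Fin m × Fin m → S) := fun u w c =>
       if u ≤ w then Pi.single (u, w) c else - Pi.single (w, u) c
     letI fw : ℕ → (ℕ → Fin m) → (Fin d →₀ ℕ) := fun L w =>
       (Finset.range L).sup fun i => a (w i)
     letI σ : ℕ → (ℕ → Fin m) → (Fin m × Fin m → S) := fun L w =>
       ∑ i ∈ Finset.range L, eps (w i) (w ((i + 1) % L))
         (monomial (fw L w - (a (w i) ⊔ a (w ((i + 1) % L)))) (1 : K))
     letI w₁ : ℕ → Fin m := fun i => v (r + i)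
     letI ℓ₁ : ℕ := s - r + 1
     letI w₂ : ℕ → Fin m := fun i => if i ≤ r then v i else v (i + (s - r - 1))
     letI ℓ₂ : ℕ := r + 1 + (ℓ - s)
     σ ℓ v = (monomial (fw ℓ v - fw ℓ₁ w₁) (1 : K)) • σ ℓ₁ w₁
           + (monomial (fw ℓ v - fw ℓ₂ w₂) (1 : K)) • σ ℓ₂ w₂
       ∧ σ ℓ v ∈ Submodule.span S {σ ℓ₁ w₁, σ ℓ₂ w₂}) :=
  stmt5_general d m ℓ r s hrs hsl v hv a
end

section
/- Let f^1,...,f^m be monomials in S, and let k with 2m−2 ≤ k ≤ binom(m,2). With transpositions ordered as τ_1=(1,2),...,τ_{m−1}=(m−1,m), τ_m=(1,m), τ_{m+1}=(1,3),...,τ_{2m−3}=(1,m−1), then all remaining ones lexicographically, let τ_k = (μ_k, ν_k). Then the monomial ideal I_k = ⟨β_1,...,β_{k−1}⟩ : β_k (i.e., the ideal I with ⟨β_1,...,β_{k−1}⟩ ∩ ⟨β_k⟩ = I·β_k) is generated by the monomials f^{μ,μ_k,ν_k}/f^{μ_k,ν_k} for μ ∈ {1,...,μ_k−1} ∪ {ν_k−1}.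 -/
/-!
Grade `S^m` by multidegree. In degree `c` the module has basis `x^{c - a v} e_v` over the `v`
with `f^v ∣ x^c`, and there `x^{c - lcm(f^μ, f^ν)} β_{μν} = e_ν - e_μ`. Hence, if the coefficient
of `x^b` in `s` is nonzero, `s β_pq ∈ ⟨β_1, …, β_{k-1}⟩` forces `p` and `q` to be joined, in
degree `c = b + lcm(f^p, f^q)`, by preceding pairs whose lcm divides `x^c`. If no `f^μ` with
`μ < p` or `μ = q - 1` divides `x^c`, every such pair stays inside or outside `[p, q - 2]`, which
contains `p` but not `q`. Conversely, each generator times `β_pq` is a combination of `β_μq` and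
`β_μp` by the three-term relation among the syzygies of `f^μ, f^p, f^q`.
-/

open MvPolynomial

section Syzygy

variable {σ ι R : Type*} [CommRing R] [DecidableEq ι]

theorem coeff_sub_mul_monomial_sub (f : MvPolynomial σ R) {u w e : σ →₀ ℕ}
    (hwu : w ≤ u) (hwe : w ≤ e) :
    coeff (e - w) (f * monomial (u - w) 1) = if u ≤ e then coeff (e - u) f else 0 := by
  simp only [coeff_mul_monomial', tsub_tsub_tsub_cancel_right hwu, tsub_le_tsub_iff_right hwe,
    mul_one]

variable (R) in
noncomputable def syzygy (a : ι → σ →₀ ℕ) (μ ν : ι) : ι → MvPolynomial σ R :=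
  Pi.single ν (monomial (a μ ⊔ a ν - a ν) 1) - Pi.single μ (monomial (a μ ⊔ a ν - a μ) 1)

variable (a : ι → σ →₀ ℕ)

theorem syzygy_swap (μ ν : ι) : syzygy R a ν μ = -syzygy R a μ ν := by
  rw [syzygy, syzygy, sup_comm, neg_sub]

theorem smul_syzygy (f : MvPolynomial σ R) (μ ν : ι) :
    f • syzygy R a μ ν =
      Pi.single ν (f * monomial (a μ ⊔ a ν - a ν) 1) -
        Pi.single μ (f * monomial (a μ ⊔ a ν - a μ) 1) := by
  rw [syzygy, smul_sub, ← Pi.single_smul, ← Pi.single_smul, smul_eq_mul, smul_eq_mul]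

theorem monomial_smul_syzygy (t : σ →₀ ℕ) (μ ν : ι) :
    monomial t (1 : R) • syzygy R a μ ν =
      Pi.single ν (monomial (t + (a μ ⊔ a ν - a ν)) 1) -
        Pi.single μ (monomial (t + (a μ ⊔ a ν - a μ)) 1) := by
  rw [smul_syzygy, monomial_mul, monomial_mul, one_mul]

theorem monomial_smul_syzygy_eq_sub (r t u : ι) :
    monomial (a r ⊔ a t ⊔ a u - (a t ⊔ a u)) (1 : R) • syzygy R a t u =
      monomial (a r ⊔ a t ⊔ a u - (a r ⊔ a u)) (1 : R) • syzygy R a r u -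
        monomial (a r ⊔ a t ⊔ a u - (a r ⊔ a t)) (1 : R) • syzygy R a r t := by
  have htu : a t ⊔ a u ≤ a r ⊔ a t ⊔ a u := sup_le (le_sup_of_le_left le_sup_right) le_sup_right
  have hru : a r ⊔ a u ≤ a r ⊔ a t ⊔ a u := sup_le (le_sup_of_le_left le_sup_left) le_sup_right
  have hrt : a r ⊔ a t ≤ a r ⊔ a t ⊔ a u := le_sup_left
  simp only [monomial_smul_syzygy, tsub_add_tsub_cancel htu le_sup_right,
    tsub_add_tsub_cancel htu le_sup_left, tsub_add_tsub_cancel hru le_sup_right,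
    tsub_add_tsub_cancel hru le_sup_left, tsub_add_tsub_cancel hrt le_sup_right,
    tsub_add_tsub_cancel hrt le_sup_left]
  abel

theorem monomial_smul_syzygy_mem {N : Submodule (MvPolynomial σ R) (ι → MvPolynomial σ R)}
    {r t u : ι} (hru : syzygy R a r u ∈ N) (hrt : syzygy R a r t ∈ N) :
    monomial (a r ⊔ a t ⊔ a u - (a t ⊔ a u)) (1 : R) • syzygy R a t u ∈ N := by
  rw [monomial_smul_syzygy_eq_sub]
  exact sub_mem (N.smul_mem _ hru) (N.smul_mem _ hrt)

/-- Pairs `f` with the multidegree-`c` basis vectors `x^{c - a v} e_v`, `v ∈ V`; it kills the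
degree-`c` part of `β_{μν}` whenever `μ` and `ν` lie on the same side of `V`. -/
noncomputable def cutCoeff (V : Finset ι) (c : σ →₀ ℕ) : (ι → MvPolynomial σ R) →ₗ[R] R :=
  ∑ v ∈ V, lcoeff R (c - a v) ∘ₗ LinearMap.proj v

theorem cutCoeff_single (V : Finset ι) (c : σ →₀ ℕ) (v : ι) (g : MvPolynomial σ R) :
    cutCoeff a V c (Pi.single v g) = if v ∈ V then coeff (c - a v) g else 0 := by
  simp [cutCoeff, Pi.single_apply, apply_ite (coeff _)]

variable {a} {V : Finset ι} {c : σ →₀ ℕ}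

theorem cutCoeff_single_mul_monomial (hV : ∀ v ∈ V, a v ≤ c) (f : MvPolynomial σ R) {v : ι}
    {L : σ →₀ ℕ} (hvL : a v ≤ L) :
    cutCoeff a V c (Pi.single v (f * monomial (L - a v) 1)) =
      if v ∈ V ∧ L ≤ c then coeff (c - L) f else 0 := by
  rw [cutCoeff_single]
  by_cases hv : v ∈ V
  · simp [hv, coeff_sub_mul_monomial_sub f hvL (hV v hv)]
  · simp [hv]

theorem cutCoeff_smul_syzygy (hV : ∀ v ∈ V, a v ≤ c) (f : MvPolynomial σ R) (μ ν : ι) :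
    cutCoeff a V c (f • syzygy R a μ ν) =
      (if ν ∈ V ∧ a μ ⊔ a ν ≤ c then coeff (c - (a μ ⊔ a ν)) f else 0) -
        (if μ ∈ V ∧ a μ ⊔ a ν ≤ c then coeff (c - (a μ ⊔ a ν)) f else 0) := by
  rw [smul_syzygy, map_sub, cutCoeff_single_mul_monomial hV f le_sup_right,
    cutCoeff_single_mul_monomial hV f le_sup_left]

theorem cutCoeff_eq_zero_of_mem_span {E : ι → ι → Prop} (hV : ∀ v ∈ V, a v ≤ c)
    (hcut : ∀ μ ν, E μ ν → a μ ⊔ a ν ≤ c → (μ ∈ V ↔ ν ∈ V)) {x : ι → MvPolynomial σ R}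
    (hx : x ∈ Submodule.span (MvPolynomial σ R) {b | ∃ μ ν, E μ ν ∧ b = syzygy R a μ ν}) :
    cutCoeff a V c x = 0 := by
  suffices ∀ f : MvPolynomial σ R, cutCoeff a V c (f • x) = 0 by simpa using this 1
  induction hx using Submodule.span_induction with
  | mem x hx =>
    obtain ⟨μ, ν, hμν, rfl⟩ := hx
    intro f
    rw [cutCoeff_smul_syzygy hV]
    by_cases hc : a μ ⊔ a ν ≤ c
    · simp [hc, hcut μ ν hμν hc]
    · simp [hc]
  | zero => simp
  | add x y _ _ hx hy => intro f; rw [smul_add, map_add, hx, hy, add_zero]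
  | smul r x _ hx => intro f; rw [smul_smul, hx]

theorem coeff_eq_zero_of_smul_syzygy_mem_span {E : ι → ι → Prop} (hV : ∀ v ∈ V, a v ≤ c)
    (hcut : ∀ μ ν, E μ ν → a μ ⊔ a ν ≤ c → (μ ∈ V ↔ ν ∈ V)) {p q : ι} (hp : p ∈ V) (hq : q ∉ V)
    (hpqc : a p ⊔ a q ≤ c) {s : MvPolynomial σ R}
    (hs : s • syzygy R a p q ∈
      Submodule.span (MvPolynomial σ R) {b | ∃ μ ν, E μ ν ∧ b = syzygy R a μ ν}) :
    coeff (c - (a p ⊔ a q)) s = 0 := by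
  have h := cutCoeff_eq_zero_of_mem_span hV hcut hs
  simpa [cutCoeff_smul_syzygy hV, hp, hq, hpqc] using h

end Syzygy

section Transpositions

variable {m : ℕ} {p q : Fin m}

/-- `(μ, ν)` precedes the transposition `(p, q)`, `1 ≤ p`, `p + 2 ≤ q`, in the paper's order
(0-indexed): adjacent pairs, pairs through `0`, and lexicographically smaller pairs with a gap. -/
def Precedes (p q μ ν : Fin m) : Prop :=
  (μ : ℕ) + 1 = ν ∨ ((μ : ℕ) = 0 ∧ 0 < (ν : ℕ)) ∨
    (1 ≤ (μ : ℕ) ∧ (μ : ℕ) + 2 ≤ (ν : ℕ) ∧ ((μ : ℕ) < p ∨ (μ = p ∧ (ν : ℕ) < q)))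

theorem precedes_of_lt_left {μ ν : Fin m} (hμp : (μ : ℕ) < p) (hμν : μ < ν) :
    Precedes p q μ ν := by
  unfold Precedes
  rw [Fin.lt_def] at hμν
  omega

theorem precedes_of_succ_eq {μ ν : Fin m} (h : (μ : ℕ) + 1 = ν) : Precedes p q μ ν :=
  Or.inl h

theorem precedes_self_left (hp : 1 ≤ (p : ℕ)) {ν : Fin m} (hpν : p < ν) (hνq : (ν : ℕ) < q) :
    Precedes p q p ν := by
  unfold Precedes
  rw [Fin.lt_def] at hpν
  omega

theorem between_iff_of_precedes (hp : 1 ≤ (p : ℕ)) {μ ν : Fin m}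
    (hμ : ¬((μ : ℕ) < p ∨ (μ : ℕ) + 1 = q)) (hν : ¬((ν : ℕ) < p ∨ (ν : ℕ) + 1 = q))
    (h : Precedes p q μ ν) :
    ((p : ℕ) ≤ μ ∧ (μ : ℕ) + 2 ≤ q) ↔ ((p : ℕ) ≤ ν ∧ (ν : ℕ) + 2 ≤ q) := by
  unfold Precedes at h
  rw [Fin.ext_iff] at h
  omega

variable {K : Type*} [CommRing K] {σ : Type*} (a : Fin m → σ →₀ ℕ)

theorem monomial_smul_syzygy_mem_span (hp : 1 ≤ (p : ℕ)) (hpq : (p : ℕ) + 2 ≤ q) {μ : Fin m}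
    (hμ : (μ : ℕ) < p ∨ (μ : ℕ) + 1 = q) :
    monomial (a μ ⊔ a p ⊔ a q - (a p ⊔ a q)) (1 : K) • syzygy K a p q ∈
      Submodule.span (MvPolynomial σ K) {b | ∃ μ ν, Precedes p q μ ν ∧ b = syzygy K a μ ν} := by
  have hmem : ∀ {μ ν}, Precedes p q μ ν → syzygy K a μ ν ∈
      Submodule.span (MvPolynomial σ K) {b | ∃ μ ν, Precedes p q μ ν ∧ b = syzygy K a μ ν} :=
    fun h => Submodule.subset_span ⟨_, _, h, rfl⟩
  apply monomial_smul_syzygy_mem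
  · rcases hμ with hμ | hμ
    · exact hmem (precedes_of_lt_left hμ (by rw [Fin.lt_def]; omega))
    · exact hmem (precedes_of_succ_eq hμ)
  · rcases hμ with hμ | hμ
    · exact hmem (precedes_of_lt_left hμ (by rw [Fin.lt_def]; omega))
    · rw [syzygy_swap, neg_mem_iff]
      exact hmem (precedes_self_left hp (by rw [Fin.lt_def]; omega) (by omega))

theorem mem_span_of_smul_syzygy_mem_span (hp : 1 ≤ (p : ℕ)) (hpq : (p : ℕ) + 2 ≤ q)
    {s : MvPolynomial σ K}
    (hs : s • syzygy K a p q ∈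
      Submodule.span (MvPolynomial σ K) {b | ∃ μ ν, Precedes p q μ ν ∧ b = syzygy K a μ ν}) :
    s ∈ Ideal.span ((fun μ : Fin m => monomial (a μ ⊔ a p ⊔ a q - (a p ⊔ a q)) (1 : K)) ''
      {μ | (μ : ℕ) < p ∨ (μ : ℕ) + 1 = q}) := by
  rw [← Set.image_image (fun e => monomial e (1 : K)), mem_ideal_span_monomial_image]
  intro b hb
  by_contra! hfar
  set c := b + (a p ⊔ a q)
  have hfar' : ∀ μ : Fin m, ((μ : ℕ) < p ∨ (μ : ℕ) + 1 = q) → ¬a μ ≤ c := by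
    intro μ hμ hμc
    refine hfar _ ⟨μ, hμ, rfl⟩ ?_
    dsimp only
    rw [sup_assoc, tsub_le_iff_right]
    exact sup_le hμc le_add_self
  let V := Finset.univ.filter fun v : Fin m => a v ≤ c ∧ (p : ℕ) ≤ v ∧ (v : ℕ) + 2 ≤ q
  have hcut : ∀ μ ν, Precedes p q μ ν → a μ ⊔ a ν ≤ c → (μ ∈ V ↔ ν ∈ V) := by
    intro μ ν hμν hc
    have hμc : a μ ≤ c := le_sup_left.trans hc
    have hνc : a ν ≤ c := le_sup_right.trans hc
    simpa [V, hμc, hνc] using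
      between_iff_of_precedes hp (hfar' μ · hμc) (hfar' ν · hνc) hμν
  have hzero := coeff_eq_zero_of_smul_syzygy_mem_span (V := V) (c := c)
    (fun v hv => (Finset.mem_filter.1 hv).2.1) hcut
    (by simp [V, c, hpq, le_sup_left.trans (le_add_self : a p ⊔ a q ≤ c)]) (by simp [V])
    le_add_self hs
  rw [add_tsub_cancel_right] at hzero
  exact (mem_support_iff.1 hb) hzero

theorem colon_syzygy_eq_span (hp : 1 ≤ (p : ℕ)) (hpq : (p : ℕ) + 2 ≤ q) :
    (Submodule.span (MvPolynomial σ K)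
        {b | ∃ μ ν, Precedes p q μ ν ∧ b = syzygy K a μ ν}).colon {syzygy K a p q} =
      Ideal.span ((fun μ : Fin m => monomial (a μ ⊔ a p ⊔ a q - (a p ⊔ a q)) (1 : K)) ''
        {μ | (μ : ℕ) < p ∨ (μ : ℕ) + 1 = q}) := by
  refine le_antisymm (fun s hs => ?_) (Ideal.span_le.2 ?_)
  · exact mem_span_of_smul_syzygy_mem_span a hp hpq (Submodule.mem_colon_singleton.1 hs)
  · rintro _ ⟨μ, hμ, rfl⟩
    exact Submodule.mem_colon_singleton.2 (monomial_smul_syzygy_mem_span a hp hpq hμ)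

end Transpositions

/-- For `2m−2 ≤ k ≤ C(m,2)`, the colon ideal `I_k = ⟨β_1,…,β_{k−1}⟩ : β_k` is generated by the
monomials `f^{μ,μ_k,ν_k}/f^{μ_k,ν_k}` for `μ ∈ {1,…,μ_k−1} ∪ {ν_k−1}`.  We use 0-indexed
vertices: `τ_k = (p,q)` with `1 ≤ p` and `p+2 ≤ q` is a "lex-tail" transposition (exactly those
with index `≥ 2m−2` in the chosen order), and the transpositions preceding it are: the adjacent
ones `(j,j+1)`, all those containing the vertex `0` (including `(0,m−1)`), and the lex-tail
ones lexicographically smaller than `(p,q)`.  `a μ` is the exponent vector of `f^μ` and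
`β_{(μ,ν)} = (f^{μ,ν}/f^ν) e_ν − (f^{μ,ν}/f^μ) e_μ`. -/
theorem stmt9 {K : Type*} [Field K] (d m : ℕ)
    (a : Fin m → (Fin d →₀ ℕ)) (p q : Fin m)
    (hp : 1 ≤ (p : ℕ)) (hpq : (p : ℕ) + 2 ≤ (q : ℕ)) :
    (letI S := MvPolynomial (Fin d) K
     letI β : Fin m → Fin m → (Fin m → S) := fun μ' ν' =>
       Pi.single ν' (monomial (a μ' ⊔ a ν' - a ν') (1 : K))
         - Pi.single μ' (monomial (a μ' ⊔ a ν' - a μ') (1 : K))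
     letI N : Submodule S (Fin m → S) := Submodule.span S
       { b | ∃ μ' ν' : Fin m,
           ((μ' : ℕ) + 1 = (ν' : ℕ)
             ∨ ((μ' : ℕ) = 0 ∧ 0 < (ν' : ℕ))
             ∨ (1 ≤ (μ' : ℕ) ∧ (μ' : ℕ) + 2 ≤ (ν' : ℕ)
                 ∧ ((μ' : ℕ) < (p : ℕ) ∨ (μ' = p ∧ (ν' : ℕ) < (q : ℕ)))))
           ∧ b = β μ' ν' }
     ∀ s : S, s • β p q ∈ N ↔
       s ∈ Ideal.span ((fun μ' : Fin m => monomial (a μ' ⊔ a p ⊔ a q - (a p ⊔ a q)) (1 : K)) ''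
         { μ' : Fin m | (μ' : ℕ) < (p : ℕ) ∨ (μ' : ℕ) + 1 = (q : ℕ) })) := fun s =>
  Submodule.mem_colon_singleton.symm.trans (SetLike.ext_iff.1 (colon_syzygy_eq_span a hp hpq) s)
end

section
/- Let Γ_k (for 2m−2 ≤ k ≤ binom(m,2)) be the spanning subgraph of the complete graph on {1,...,m} consisting of the first k edges in the order: (1,2),...,(m−1,m), (1,m), (1,3),(1,4),...,(1,m−1), then remaining pairs (μ,ν) with 2 ≤ μ < ν in lexicographic order. Then the minimal circuits of Γ_k (circuits of length ≥ 3 admitting no chord in Γ_k) are exactly the triangles of the form (μ_i, μ_j, ν, μ_i) arising from pairs of edges e_i = (μ_i, ν) and e_j = (μ_j, ν) in Γ_k with i < j sharing the same head ν, together with the edge (μ_i, μ_j). -/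
/-!
Every vertex `u` of `Γ_k` that is joined to some `q > u` is joined to all `w` with `u < w ≤ q`:
the tail edges form a lexicographic initial segment and `0` is joined to everything. Graphs with
this property are chordal. On a circuit of length at least four take the smallest vertex `s`,
with circuit neighbours `a < b`. If another vertex `t` of the circuit has `t ≤ b`, then `st` is a
chord; otherwise the other neighbour `c` of `a` satisfies `a < b < c`, and `ab` is a chord.
Conversely, any two vertices of a triangle are consecutive on it.
-/

open Function

/-- `Γ_k` on the vertices `0, …, m - 1`: the path edges `(μ, μ + 1)`, all edges at `0`, and the
tail edges `T`, which form a lexicographic initial segment. -/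
def gammaEdge (T : Set (ℕ × ℕ)) (μ ν : ℕ) : Prop :=
  ν = μ + 1 ∨ μ = 0 ∨ (μ, ν) ∈ T

def gammaAdj (T : Set (ℕ × ℕ)) {m : ℕ} (u w : Fin m) : Prop :=
  (u < w ∧ gammaEdge T u w) ∨ (w < u ∧ gammaEdge T w u)

section Gamma

variable {T : Set (ℕ × ℕ)} {m : ℕ}

lemma gammaEdge_of_lt_of_le
    (hTdown : ∀ e ∈ T, ∀ p q : ℕ, 1 ≤ p → p + 2 ≤ q → q < m →
      (p < e.1 ∨ (p = e.1 ∧ q ≤ e.2)) → (p, q) ∈ T)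
    {u w q : ℕ} (huq : gammaEdge T u q) (huw : u < w) (hwq : w ≤ q) (hw : w < m) :
    gammaEdge T u w := by
  rcases huq with rfl | hu | huq
  · exact Or.inl (by omega)
  · exact Or.inr (Or.inl hu)
  · by_cases hu : u = 0
    · exact Or.inr (Or.inl hu)
    by_cases hwu : w = u + 1
    · exact Or.inl hwu
    exact Or.inr (Or.inr (hTdown _ huq u w (by omega) (by omega) hw (Or.inr ⟨rfl, hwq⟩)))

lemma gammaAdj_of_lt_of_le
    (hTdown : ∀ e ∈ T, ∀ p q : ℕ, 1 ≤ p → p + 2 ≤ q → q < m →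
      (p < e.1 ∨ (p = e.1 ∧ q ≤ e.2)) → (p, q) ∈ T)
    ⦃u w q : Fin m⦄ (huq : gammaAdj T u q) (huw : u < w) (hwq : w ≤ q) :
    gammaAdj T u w := by
  have huq' : gammaEdge T u q := by
    rcases huq with ⟨-, h⟩ | ⟨h, -⟩
    · exact h
    · exact absurd (huw.trans_le hwq) h.not_gt
  exact Or.inl ⟨huw, gammaEdge_of_lt_of_le hTdown huq' huw hwq w.2⟩

instance : Std.Symm (gammaAdj T (m := m)) where
  symm _ _ := Or.symm

lemma gammaAdj_irrefl (u : Fin m) : ¬ gammaAdj T u u := by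
  rintro (⟨h, -⟩ | ⟨h, -⟩) <;> exact lt_irrefl u h

end Gamma

section Chordal

open Fin.CommRing

variable {ℓ : ℕ} [NeZero ℓ]

lemma Fin.natCast_ne_zero_of_lt {k : ℕ} (hk : 0 < k) (hkℓ : k < ℓ) : (k : Fin ℓ) ≠ 0 := by
  rw [Ne, Fin.natCast_eq_zero]
  exact fun h => (Nat.le_of_dvd hk h).not_gt hkℓ

variable {α : Type*} {r : α → α → Prop}

def IsClosedWalk (r : α → α → Prop) (w : Fin ℓ → α) : Prop :=
  ∀ i, r (w i) (w (i + 1))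

def HasChord (r : α → α → Prop) (w : Fin ℓ → α) : Prop :=
  ∃ i j, r (w i) (w j) ∧ i + 1 ≠ j ∧ j + 1 ≠ i

lemma IsClosedWalk.comp_neg [Std.Symm r] {w : Fin ℓ → α} (hw : IsClosedWalk r w) :
    IsClosedWalk r (w ∘ Neg.neg) := by
  intro i
  have h : -(i + 1) + 1 = -i := by ring
  simpa only [comp_apply, h] using symm_of r (hw (-(i + 1)))

lemma HasChord.of_comp_neg {w : Fin ℓ → α} (h : HasChord r (w ∘ Neg.neg)) : HasChord r w := by
  obtain ⟨i, j, hij, h₁, h₂⟩ := h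
  exact ⟨-i, -j, hij, fun h => h₂ (by linear_combination h), fun h => h₁ (by linear_combination h)⟩

variable [LinearOrder α]

lemma IsClosedWalk.hasChord_of_lt [Std.Symm r] (hℓ : 4 ≤ ℓ)
    (hr : ∀ ⦃u w q⦄, r u q → u < w → w ≤ q → r u w)
    {w : Fin ℓ → α} (hcyc : IsClosedWalk r w) (hw : Injective w)
    {p : Fin ℓ} (hmin : ∀ t, w p ≤ w t) (hlt : w (p + 1) < w (p - 1)) :
    HasChord r w := by
  have h1 : ((1 : ℕ) : Fin ℓ) ≠ 0 := Fin.natCast_ne_zero_of_lt one_pos (by omega)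
  have h2 : ((2 : ℕ) : Fin ℓ) ≠ 0 := Fin.natCast_ne_zero_of_lt two_pos (by omega)
  have h3 : ((3 : ℕ) : Fin ℓ) ≠ 0 := Fin.natCast_ne_zero_of_lt three_pos (by omega)
  push_cast at h1 h2 h3
  have hp_lt {t} (ht : t ≠ p) : w p < w t := (hmin t).lt_of_ne (hw.ne ht.symm)
  have hedge : r (w p) (w (p - 1)) := by
    simpa using symm_of r (hcyc (p - 1))
  by_cases hlow : ∃ t, t ≠ p ∧ t ≠ p + 1 ∧ t ≠ p - 1 ∧ w t ≤ w (p - 1)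
  · obtain ⟨t, htp, htp₁, htp₂, ht⟩ := hlow
    refine ⟨p, t, hr hedge (hp_lt htp) ht, Ne.symm htp₁, fun h => htp₂ ?_⟩
    rw [← h, add_sub_cancel_right]
  · push Not at hlow
    have hfar : w (p - 1) < w (p + 1 + 1) :=
      hlow _ (fun h => h2 (by linear_combination h)) (fun h => h1 (by linear_combination h))
        (fun h => h3 (by linear_combination h))
    refine ⟨p + 1, p - 1, hr (hcyc (p + 1)) hlt hfar.le, fun h => h3 ?_, fun h => h1 ?_⟩
    · linear_combination h
    · linear_combination -h

lemma IsClosedWalk.hasChord [Std.Symm r] (hℓ : 4 ≤ ℓ)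
    (hr : ∀ ⦃u w q⦄, r u q → u < w → w ≤ q → r u w)
    {w : Fin ℓ → α} (hcyc : IsClosedWalk r w) (hw : Injective w) : HasChord r w := by
  obtain ⟨p, hmin⟩ := Finite.exists_min w
  have h2 : ((2 : ℕ) : Fin ℓ) ≠ 0 := Fin.natCast_ne_zero_of_lt two_pos (by omega)
  push_cast at h2
  rcases (hw.ne fun h => h2 (by linear_combination h) : w (p + 1) ≠ w (p - 1)).lt_or_gt
    with hlt | hgt
  · exact hcyc.hasChord_of_lt hℓ hr hw hmin hlt
  · refine HasChord.of_comp_neg (hcyc.comp_neg.hasChord_of_lt hℓ hr (hw.comp neg_injective)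
      (p := -p) (fun t => by simpa using hmin (-t)) ?_)
    convert hgt using 2 <;> simp only [comp_apply] <;> congr 1 <;> ring

end Chordal

lemma exists_chord_of_four_le {α : Type*} [LinearOrder α] {r : α → α → Prop} [Std.Symm r]
    (hr : ∀ ⦃u w q⦄, r u q → u < w → w ≤ q → r u w)
    {ℓ : ℕ} (hℓ : 4 ≤ ℓ) {v : ℕ → α} (hinj : ∀ i < ℓ, ∀ j < ℓ, v i = v j → i = j)
    (hcirc : ∀ i < ℓ, r (v i) (v ((i + 1) % ℓ))) :
    ∃ i < ℓ, ∃ j < ℓ, r (v i) (v j) ∧ (i + 1) % ℓ ≠ j ∧ (j + 1) % ℓ ≠ i := by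
  have : NeZero ℓ := ⟨by omega⟩
  have val_succ (i : Fin ℓ) : ((i + 1 : Fin ℓ) : ℕ) = (i + 1) % ℓ := by
    rw [Fin.val_add, Fin.val_one', Nat.add_mod_mod]
  have hcyc : IsClosedWalk r fun i : Fin ℓ => v i :=
    fun i => by simpa only [val_succ] using hcirc i i.2
  obtain ⟨i, j, hij, h₁, h₂⟩ := hcyc.hasChord hℓ hr fun i j h => Fin.ext (hinj i i.2 j j.2 h)
  exact ⟨i, i.2, j, j.2, hij, fun h => h₁ (Fin.ext (by rw [val_succ, h])),
    fun h => h₂ (Fin.ext (by rw [val_succ, h]))⟩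

theorem stmt10_general (m : ℕ) (T : Set (ℕ × ℕ))
    (hTdown : ∀ e ∈ T, ∀ p q : ℕ, 1 ≤ p → p + 2 ≤ q → q < m →
      (p < e.1 ∨ (p = e.1 ∧ q ≤ e.2)) → (p, q) ∈ T)
    (ℓ : ℕ) (hl : 3 ≤ ℓ) (v : ℕ → Fin m)
    (hinj : ∀ i < ℓ, ∀ j < ℓ, v i = v j → i = j) :
    (letI edge : Fin m → Fin m → Prop := fun μ ν =>
       (ν : ℕ) = (μ : ℕ) + 1 ∨ (μ : ℕ) = 0 ∨ ((μ : ℕ), (ν : ℕ)) ∈ T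
     letI adj : Fin m → Fin m → Prop := fun u w =>
       (u < w ∧ edge u w) ∨ (w < u ∧ edge w u)
     (∀ i < ℓ, adj (v i) (v ((i + 1) % ℓ))) →
      ((¬ ∃ i < ℓ, ∃ j < ℓ, adj (v i) (v j) ∧ (i + 1) % ℓ ≠ j ∧ (j + 1) % ℓ ≠ i)
        ↔ ℓ = 3)) := by
  intro hcirc
  constructor
  · intro hchordless
    by_contra hℓ
    exact hchordless
      (exists_chord_of_four_le (gammaAdj_of_lt_of_le hTdown) (by omega) hinj hcirc)
  · rintro rfl ⟨i, hi, j, hj, hij, h₁, h₂⟩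
    obtain rfl : i = j := by omega
    exact gammaAdj_irrefl _ hij

/-- Lemma 2.6: for `2m−2 ≤ k ≤ C(m,2)`, the minimal circuits of `Γ_k` are exactly the triangles,
i.e. a circuit of `Γ_k` has no chord iff it has length `3` (and a triangle consists of two
edges `(μ_i,ν)`, `(μ_j,ν)` sharing a head together with the edge `(μ_i,μ_j)`).  Vertices are
0-indexed; `Γ_k` consists of the adjacent edges `(j,j+1)`, all edges through the vertex `0`
(including `(0,m−1)`), and a nonempty lexicographically-downward-closed set `T` of "tail" edges
`(p,q)` with `1 ≤ p`, `p+2 ≤ q < m` — exactly the graphs `Γ_k` with `2m−2 ≤ k ≤ C(m,2)`.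
A circuit is given by a vertex list `v 0, …, v (ℓ−1)` of pairwise distinct vertices, `ℓ ≥ 3`,
whose cyclically consecutive vertices are joined by edges of `Γ_k`; a chord is an edge of
`Γ_k` joining two vertices of the circuit that is not traversed by it. -/
theorem stmt10 (m : ℕ) (T : Set (ℕ × ℕ)) (hT : T.Nonempty)
    (hTtail : ∀ e ∈ T, 1 ≤ e.1 ∧ e.1 + 2 ≤ e.2 ∧ e.2 < m)
    (hTdown : ∀ e ∈ T, ∀ p q : ℕ, 1 ≤ p → p + 2 ≤ q → q < m →
      (p < e.1 ∨ (p = e.1 ∧ q ≤ e.2)) → (p, q) ∈ T)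
    (ℓ : ℕ) (hl : 3 ≤ ℓ) (v : ℕ → Fin m)
    (hinj : ∀ i < ℓ, ∀ j < ℓ, v i = v j → i = j) :
    (letI edge : Fin m → Fin m → Prop := fun μ ν =>
       (ν : ℕ) = (μ : ℕ) + 1 ∨ (μ : ℕ) = 0 ∨ ((μ : ℕ), (ν : ℕ)) ∈ T
     letI adj : Fin m → Fin m → Prop := fun u w =>
       (u < w ∧ edge u w) ∨ (w < u ∧ edge w u)
     (∀ i < ℓ, adj (v i) (v ((i + 1) % ℓ))) →
      ((¬ ∃ i < ℓ, ∃ j < ℓ, adj (v i) (v j) ∧ (i + 1) % ℓ ≠ j ∧ (j + 1) % ℓ ≠ i)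
        ↔ ℓ = 3)) :=
  stmt10_general m T hTdown ℓ hl v hinj
end

section
/- Let S = k[x_1,...,x_d] and let u_1,...,u_m, g_1,...,g_m ∈ S be nonzero with g_i monomials satisfying gcd(g_1,...,g_m) = 1, and suppose u_{j−1}·g_j = u_j·g_{j−1} for all j (indices mod m, so also u_m·g_1 = u_1·g_m). Then g_j divides u_j for every j, and setting u = u_1/g_1 one has u_j = u·g_j for all j. -/
open MvPolynomial

/-!
The cyclic relations say that all the fractions `u_j / g_j` coincide, so `u_j g_k = u_k g_j` for
all `j, k`. Thus `g_1` divides `u_1 g_k` for every `k`; as each variable is absent from some `g_k`,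
comparing exponents on the support of `u_1` gives `g_1 ∣ u_1`, and the quotient is the common `u`.
-/

open Fin.NatCast in
theorem Fin.apply_eq_apply_of_apply_sub_one {α : Type*} {m : ℕ} [NeZero m] {w : Fin m → α}
    (h : ∀ j, w (j - 1) = w j) (j k : Fin m) : w j = w k := by
  have step : ∀ n : ℕ, w (j + n) = w j := by
    intro n
    induction n with
    | zero => simp
    | succ n ih => rw [← ih, ← h, Nat.cast_succ, ← add_assoc, add_sub_cancel_right]
  simpa [Fin.cast_val_eq_self] using (step (k - j).val).symm

theorem Fin.mul_eq_mul_of_mul_sub_one {R : Type*} [CommRing R] [IsDomain R] {m : ℕ} [NeZero m]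
    {f g : Fin m → R} (hg : ∀ j, g j ≠ 0) (h : ∀ j, f (j - 1) * g j = f j * g (j - 1))
    (j k : Fin m) : f j * g k = f k * g j := by
  set φ := algebraMap R (FractionRing R)
  have hinj : Function.Injective φ := IsFractionRing.injective R (FractionRing R)
  have hg' : ∀ j, φ (g j) ≠ 0 := fun j => (map_ne_zero_iff φ hinj).2 (hg j)
  have hratio : φ (f j) / φ (g j) = φ (f k) / φ (g k) := by
    refine Fin.apply_eq_apply_of_apply_sub_one (w := fun j => φ (f j) / φ (g j)) (fun j => ?_) j k
    rw [div_eq_div_iff (hg' _) (hg' _), ← map_mul, ← map_mul, h]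
  rw [div_eq_div_iff (hg' _) (hg' _), ← map_mul, ← map_mul] at hratio
  exact hinj hratio

theorem MvPolynomial.monomial_one_dvd_iff_forall_mem_support_le {σ R : Type*} [CommSemiring R]
    {s : σ →₀ ℕ} {p : MvPolynomial σ R} : monomial s (1 : R) ∣ p ↔ ∀ a ∈ p.support, s ≤ a := by
  rw [monomial_one_dvd_iff_modMonomial_eq_zero, MvPolynomial.ext_iff]
  refine forall_congr' fun a => ?_
  by_cases hs : s ≤ a <;> simp [hs]

theorem MvPolynomial.monomial_one_dvd_of_forall_dvd_mul_monomial {σ R ι : Type*}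
    [CommSemiring R] {s : σ →₀ ℕ} {t : ι → σ →₀ ℕ} {p : MvPolynomial σ R}
    (ht : ∀ i, ∃ k, t k i = 0) (h : ∀ k, monomial s (1 : R) ∣ p * monomial (t k) 1) :
    monomial s (1 : R) ∣ p := by
  refine monomial_one_dvd_iff_forall_mem_support_le.2 fun a ha i => ?_
  obtain ⟨k, hk⟩ := ht i
  have hmem : a + t k ∈ (p * monomial (t k) 1).support := by
    simpa [mem_support_iff, coeff_mul_monomial] using ha
  simpa [hk] using monomial_one_dvd_iff_forall_mem_support_le.1 (h k) (a + t k) hmem i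

theorem stmt13_general {K : Type*} [Field K] (d m : ℕ) [NeZero m]
    (b : Fin m → (Fin d →₀ ℕ)) (hgcd : ∀ i : Fin d, ∃ j : Fin m, b j i = 0)
    (u : Fin m → MvPolynomial (Fin d) K)
    (hrel : ∀ j : Fin m, u (j - 1) * monomial (b j) (1 : K)
      = u j * monomial (b (j - 1)) (1 : K)) :
    (∀ j, monomial (b j) (1 : K) ∣ u j) ∧
      ∃ c : MvPolynomial (Fin d) K, ∀ j, u j = c * monomial (b j) (1 : K) := by
  have hb : ∀ j, monomial (b j) (1 : K) ≠ 0 := fun j => by simp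
  have hcross := Fin.mul_eq_mul_of_mul_sub_one hb hrel
  obtain ⟨c, hc⟩ : monomial (b 0) (1 : K) ∣ u 0 :=
    monomial_one_dvd_of_forall_dvd_mul_monomial hgcd fun k => ⟨u k, by rw [hcross, mul_comm]⟩
  have hu : ∀ j, u j = c * monomial (b j) (1 : K) := fun j =>
    mul_right_cancel₀ (hb 0) (by rw [hcross, hc]; ring)
  exact ⟨fun j => ⟨c, by rw [hu j, mul_comm]⟩, c, hu⟩

/-- Key step in computing `H^{−2}` of the wheel complex: if `g_1, …, g_m` are monomials with
`gcd(g_1,…,g_m) = 1` (exponent vectors `b j` with `inf_j b j = 0`), the `u_j ∈ S` are nonzero,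
and `u_{j−1} g_j = u_j g_{j−1}` cyclically, then `g_j ∣ u_j` for all `j` and, with
`u = u_1/g_1`, one has `u_j = u · g_j` for all `j`. -/
theorem stmt13 {K : Type*} [Field K] (d m : ℕ) (hm : 2 ≤ m) [NeZero m]
    (b : Fin m → (Fin d →₀ ℕ)) (hgcd : ∀ i : Fin d, ∃ j : Fin m, b j i = 0)
    (u : Fin m → MvPolynomial (Fin d) K) (hu : ∀ j, u j ≠ 0)
    (hrel : ∀ j : Fin m, u (j - 1) * monomial (b j) (1 : K)
      = u j * monomial (b (j - 1)) (1 : K)) :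
    (∀ j, monomial (b j) (1 : K) ∣ u j) ∧
      ∃ c : MvPolynomial (Fin d) K, ∀ j, u j = c * monomial (b j) (1 : K) :=
  stmt13_general d m b hgcd u hrel
end

section
/- Let f^1, f^2, f^3 be monomials in S = k[x,y,z,...] and set β_1 = (f^{1,2}/f^2)e_2 − (f^{1,2}/f^1)e_1, β_2 = (f^{2,3}/f^3)e_3 − (f^{2,3}/f^2)e_2, β_3 = (f^{1,3}/f^3)e_3 − (f^{1,3}/f^1)e_1 (with f^{i,j} = lcm(f^i,f^j)). Then β_1, β_2, β_3 generate the kernel of the map S^3 → S, e_i ↦ f^i. In contrast, if f^1 = x, f^2 = x+y, f^3 = y (non-monomials), the element (1, −1, 1) lies in the kernel of (s_1,s_2,s_3) ↦ s_1 f^1 + s_2 f^2 + s_3 f^3 but not in the submodule generated by (f^2, −f^1, 0), (−f^3, 0, f^1), (0, f^3, −f^2). -/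
/-!
A syzygy `s` of the monomials `x^{a i}` cancels degree by degree: a term `c x^m e_μ` of `s`
must be cancelled, in degree `m + a μ`, by a term of some other component `e_ν`. Adding
`c x^{m + a μ - (a μ ⊔ a ν)} β_{μν}`, where `β_{μν} = koszulSyzygy a μ ν`, removes the first term
without creating new ones, so induction on the number of terms expresses `s` through the
`β_{μν}`.

For `x, x + y, y` the argument breaks down: all three Koszul relations have a first component
without constant term, while `(1, -1, 1)` does not.
-/

open MvPolynomial

namespace MvPolynomial

variable {R σ ι : Type*} [CommRing R]

lemma support_add_monomial_subset {p : MvPolynomial σ R} {m : σ →₀ ℕ} (hm : coeff m p ≠ 0)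
    (c : R) : (p + monomial m c).support ⊆ p.support := by
  classical
  intro x hx
  rcases Finset.mem_union.mp (support_add hx) with hx | hx
  · exact hx
  · rw [Finset.mem_singleton.mp (support_monomial_subset hx)]
    exact mem_support_iff.mpr hm

lemma support_sub_monomial_coeff_ssubset {p : MvPolynomial σ R} {m : σ →₀ ℕ}
    (hm : coeff m p ≠ 0) : (p - monomial m (coeff m p)).support ⊂ p.support := by
  classical
  refine Finset.ssubset_iff_subset_ne.mpr ⟨fun x hx => ?_, fun h => ?_⟩
  · rcases Finset.mem_union.mp (support_sub σ _ _ hx) with hx | hx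
    · exact hx
    · rw [Finset.mem_singleton.mp (support_monomial_subset hx)]
      exact mem_support_iff.mpr hm
  · have : m ∈ (p - monomial m (coeff m p)).support := h ▸ mem_support_iff.mpr hm
    simp at this

section Fintype

variable [Fintype ι]

lemma coeff_linearCombination_monomial (a : ι → σ →₀ ℕ) (s : ι → MvPolynomial σ R)
    (b : σ →₀ ℕ) :
    coeff b (Fintype.linearCombination (MvPolynomial σ R) (fun i => monomial (a i) (1 : R)) s) =
      ∑ i, if a i ≤ b then coeff (b - a i) (s i) else 0 := by
  simp [Fintype.linearCombination_apply, coeff_sum, coeff_mul_monomial']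

lemma exists_ne_coeff_ne_zero_of_mem_ker {a : ι → σ →₀ ℕ} {s : ι → MvPolynomial σ R}
    (hs : s ∈ LinearMap.ker
      (Fintype.linearCombination (MvPolynomial σ R) (fun i => monomial (a i) (1 : R))))
    {μ : ι} {m : σ →₀ ℕ} (hm : coeff m (s μ) ≠ 0) :
    ∃ ν ≠ μ, a ν ≤ m + a μ ∧ coeff (m + a μ - a ν) (s ν) ≠ 0 := by
  by_contra! h
  have hcoeff := congrArg (coeff (m + a μ)) (LinearMap.mem_ker.mp hs)
  rw [coeff_linearCombination_monomial, coeff_zero, Finset.sum_eq_single μ, if_pos le_add_self,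
    add_tsub_cancel_right] at hcoeff
  · exact hm hcoeff
  · intro ν _ hν
    split_ifs with hle
    · exact h ν hν hle
    · rfl
  · simp

end Fintype

section DecidableEq

variable [DecidableEq ι]

noncomputable def koszulSyzygy (a : ι → σ →₀ ℕ) (μ ν : ι) : ι → MvPolynomial σ R :=
  Pi.single ν (monomial (a μ ⊔ a ν - a ν) 1) - Pi.single μ (monomial (a μ ⊔ a ν - a μ) 1)

lemma koszulSyzygy_swap (a : ι → σ →₀ ℕ) (μ ν : ι) :
    (koszulSyzygy a ν μ : ι → MvPolynomial σ R) = -koszulSyzygy a μ ν := by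
  rw [koszulSyzygy, koszulSyzygy, sup_comm, neg_sub]

lemma koszulSyzygy_self (a : ι → σ →₀ ℕ) (μ : ι) :
    (koszulSyzygy a μ μ : ι → MvPolynomial σ R) = 0 :=
  sub_self _

lemma monomial_smul_koszulSyzygy (a : ι → σ →₀ ℕ) {μ ν : ι} {b : σ →₀ ℕ}
    (hb : a μ ⊔ a ν ≤ b) (c : R) :
    monomial (b - (a μ ⊔ a ν)) c • koszulSyzygy a μ ν =
      (Pi.single ν (monomial (b - a ν) c) - Pi.single μ (monomial (b - a μ) c) :
        ι → MvPolynomial σ R) := by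
  simp only [koszulSyzygy, smul_sub, ← Pi.single_smul', smul_eq_mul, monomial_mul, mul_one,
    tsub_add_tsub_cancel hb le_sup_left, tsub_add_tsub_cancel hb le_sup_right]

variable [Fintype ι]

lemma linearCombination_koszulSyzygy (a : ι → σ →₀ ℕ) (μ ν : ι) :
    Fintype.linearCombination (MvPolynomial σ R) (fun i => monomial (a i) (1 : R))
      (koszulSyzygy a μ ν) = 0 := by
  simp only [koszulSyzygy, map_sub, Fintype.linearCombination_apply_single, smul_eq_mul,
    monomial_mul, mul_one, tsub_add_cancel_of_le le_sup_left,
    tsub_add_cancel_of_le le_sup_right, sub_self]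

lemma exists_add_smul_koszulSyzygy_card_support_lt {a : ι → σ →₀ ℕ}
    {s : ι → MvPolynomial σ R}
    (hs : s ∈ LinearMap.ker
      (Fintype.linearCombination (MvPolynomial σ R) (fun i => monomial (a i) (1 : R))))
    (hs0 : s ≠ 0) :
    ∃ (μ ν : ι) (t : MvPolynomial σ R),
      ∑ i, ((s + t • koszulSyzygy a μ ν : ι → MvPolynomial σ R) i).support.card <
        ∑ i, (s i).support.card := by
  obtain ⟨μ, hμ⟩ := Function.ne_iff.mp hs0
  obtain ⟨m, hm⟩ := support_nonempty.mpr hμ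
  rw [mem_support_iff] at hm
  obtain ⟨ν, hνμ, hle, hν⟩ := exists_ne_coeff_ne_zero_of_mem_ker hs hm
  set c := coeff m (s μ)
  refine ⟨μ, ν, monomial (m + a μ - (a μ ⊔ a ν)) c, ?_⟩
  rw [monomial_smul_koszulSyzygy a (sup_le le_add_self hle), add_tsub_cancel_right]
  set s' := s + (Pi.single ν (monomial (m + a μ - a ν) c) - Pi.single μ (monomial m c))
  have hs'μ : s' μ = s μ - monomial m c := by simp [s', Pi.single_eq_of_ne' hνμ, sub_eq_add_neg]
  refine Finset.sum_lt_sum (fun i _ => ?_) ⟨μ, Finset.mem_univ _, ?_⟩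
  · rcases eq_or_ne i μ with rfl | hiμ
    · rw [hs'μ]
      exact Finset.card_le_card (support_sub_monomial_coeff_ssubset hm).subset
    rcases eq_or_ne i ν with rfl | hiν
    · have hs'ν : s' i = s i + monomial (m + a μ - a i) c := by simp [s', hνμ]
      rw [hs'ν]
      exact Finset.card_le_card (support_add_monomial_subset hν c)
    · simp [s', hiμ, hiν]
  · rw [hs'μ]
    exact Finset.card_lt_card (support_sub_monomial_coeff_ssubset hm)

theorem ker_linearCombination_monomial_le_span_koszulSyzygy (a : ι → σ →₀ ℕ) :
    LinearMap.ker
        (Fintype.linearCombination (MvPolynomial σ R) (fun i => monomial (a i) (1 : R))) ≤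
      Submodule.span (MvPolynomial σ R)
        (Set.range (Function.uncurry (koszulSyzygy (R := R) a))) := by
  intro s hs
  induction hn : ∑ i, (s i).support.card using Nat.strong_induction_on generalizing s with
  | _ n ih =>
  by_cases hs0 : s = 0
  · simp [hs0]
  obtain ⟨μ, ν, t, hlt⟩ := exists_add_smul_koszulSyzygy_card_support_lt hs hs0
  have hker : koszulSyzygy a μ ν ∈ LinearMap.ker
      (Fintype.linearCombination (MvPolynomial σ R) (fun i => monomial (a i) (1 : R))) :=
    linearCombination_koszulSyzygy a μ ν
  have hspan : koszulSyzygy a μ ν ∈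
      Submodule.span (MvPolynomial σ R)
        (Set.range (Function.uncurry (koszulSyzygy (R := R) a))) :=
    Submodule.subset_span ⟨(μ, ν), rfl⟩
  have hs' := ih _ (hn ▸ hlt) (add_mem hs (Submodule.smul_mem _ t hker)) rfl
  simpa using sub_mem hs' (Submodule.smul_mem _ t hspan)

end DecidableEq

theorem ker_linearCombination_monomial_eq_span_koszulSyzygy [Fintype ι] [LinearOrder ι]
    (a : ι → σ →₀ ℕ) :
    LinearMap.ker
        (Fintype.linearCombination (MvPolynomial σ R) (fun i => monomial (a i) (1 : R))) =
      Submodule.span (MvPolynomial σ R) {b | ∃ μ ν, μ < ν ∧ b = koszulSyzygy a μ ν} := by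
  refine le_antisymm ((ker_linearCombination_monomial_le_span_koszulSyzygy a).trans
    (Submodule.span_le.mpr (Set.range_subset_iff.mpr fun p => ?_)))
    (Submodule.span_le.mpr ?_)
  obtain ⟨μ, ν⟩ := p
  rcases lt_trichotomy μ ν with h | rfl | h
  · exact Submodule.subset_span ⟨μ, ν, h, rfl⟩
  · simp [koszulSyzygy_self]
  · rw [Function.uncurry_apply_pair, koszulSyzygy_swap a ν μ]
    exact neg_mem (Submodule.subset_span ⟨ν, μ, h, rfl⟩)
  · rintro _ ⟨μ, ν, -, rfl⟩
    exact linearCombination_koszulSyzygy a μ ν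

end MvPolynomial

theorem Submodule.notMem_span_of_apply_notMem {R ι : Type*} [Semiring R] {S : Set (ι → R)}
    (I : Ideal R) (i : ι) (hS : ∀ w ∈ S, w i ∈ I) {v : ι → R} (hv : v i ∉ I) :
    v ∉ Submodule.span R S :=
  fun h => hv ((Submodule.span_le
    (p := Submodule.comap (LinearMap.proj i : (ι → R) →ₗ[R] R) I)).mpr hS h)

/-- (a) For monomials `f^1, f^2, f^3` (exponent vectors `a 0, a 1, a 2`), the elements
`β₁ = β_{(1,2)}, β₂ = β_{(2,3)}, β₃ = β_{(1,3)}` generate the kernel of `S³ → S`, `e_i ↦ f^i`.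
(b) In contrast (Example 1.3), for the non-monomials `f¹ = x, f² = x + y, f³ = y` the element
`(1, −1, 1)` lies in the kernel of `(s₁,s₂,s₃) ↦ s₁f¹ + s₂f² + s₃f³` but not in the submodule
generated by `(f²,−f¹,0), (−f³,0,f¹), (0,f³,−f²)`. -/
theorem stmt18 {K : Type*} [Field K] :
    (∀ d : ℕ, ∀ a : Fin 3 → (Fin d →₀ ℕ),
      LinearMap.ker (Fintype.linearCombination (MvPolynomial (Fin d) K)
          (fun μ => (monomial (a μ) (1 : K)))) =
        Submodule.span (MvPolynomial (Fin d) K)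
          { b : Fin 3 → MvPolynomial (Fin d) K | ∃ μ ν : Fin 3, μ < ν ∧
              b = Pi.single ν (monomial (a μ ⊔ a ν - a ν) (1 : K))
                - Pi.single μ (monomial (a μ ⊔ a ν - a μ) (1 : K)) }) ∧
    (letI S := MvPolynomial (Fin 2) K
     letI f : Fin 3 → S := ![X 0, X 0 + X 1, X 1]
     letI v : Fin 3 → S := ![1, -1, 1]
     (∑ i : Fin 3, v i * f i = 0) ∧
       v ∉ Submodule.span S
         ({![f 1, -(f 0), 0], ![-(f 2), 0, f 0], ![0, f 2, -(f 1)]} : Set (Fin 3 → S))) := by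
  refine ⟨fun d a => ker_linearCombination_monomial_eq_span_koszulSyzygy a,
    by simp [Fin.sum_univ_three], ?_⟩
  refine Submodule.notMem_span_of_apply_notMem (RingHom.ker constantCoeff) 0 ?_ (by simp)
  rintro w (rfl | rfl | rfl) <;> simp
end
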